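/- Along any solution (m, n, e) of the magnetic rod equations, the quantity C₂ = e·n is constant in t (its derivative vanishes identically). -/

import Mathlib

open Matrix Real

local notation:74 a:74 " ×₃ " b:75 => crossProduct a b

/-! Both equations for `e` and `n` consist of a common rotation term (`× u`) and, for `n`, a
magnetic term `λ e × w`. The dot product is invariant under the common rotation, and the magnetic
term is orthogonal to `e`; so `(e ⬝ n)' = 0` whatever the constitutive relations for `u` and `w`. -/

theorem HasDerivAt.dotProduct {𝕜 ι : Type*} [NontriviallyNormedField 𝕜] [Fintype ι]
    {f g : 𝕜 → ι → 𝕜} {f' g' : ι → 𝕜} {t : 𝕜}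
    (hf : HasDerivAt f f' t) (hg : HasDerivAt g g' t) :
    HasDerivAt (fun s => f s ⬝ᵥ g s) (f' ⬝ᵥ g t + f t ⬝ᵥ g') t := by
  have hfi := hasDerivAt_pi.mp hf
  have hgi := hasDerivAt_pi.mp hg
  have h := HasDerivAt.fun_sum (u := Finset.univ) fun i _ => (hfi i).fun_mul (hgi i)
  rw [Finset.sum_add_distrib] at h
  exact h

theorem cross_dotProduct_add_dotProduct_cross {R : Type*} [CommRing R] (e n u : Fin 3 → R) :
    e ×₃ u ⬝ᵥ n + e ⬝ᵥ n ×₃ u = 0 := by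
  rw [dotProduct_comm, triple_product_permutation, ← cross_anticomm, dotProduct_neg,
    neg_add_cancel]

theorem casimir_C2_conserved_general
    (lam : ℝ)
    (n e : ℝ → Fin 3 → ℝ)
    (hn : Differentiable ℝ n) (he : Differentiable ℝ e)
    (u : ℝ → Fin 3 → ℝ)
    (w : ℝ → Fin 3 → ℝ)
    (heqn : ∀ t, deriv n t = n t ×₃ u t + lam • (e t ×₃ w t))
    (heqe : ∀ t, deriv e t = e t ×₃ u t) :
    ∀ t, deriv (fun t => e t ⬝ᵥ n t) t = 0 := by
  intro t
  rw [((he t).hasDerivAt.dotProduct (hn t).hasDerivAt).deriv, heqe, heqn, dotProduct_add,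
    ← add_assoc, cross_dotProduct_add_dotProduct_cross, dotProduct_smul, dot_self_cross,
    smul_zero, zero_add]

/-- Along any solution `(m, n, e)` of the magnetic rod equations,
the Casimir `C₂ = e·n` is constant in `t`: its derivative vanishes identically. -/
theorem casimir_C2_conserved
    (B₁ B₂ C H J K lam : ℝ)
    (hB₁ : 0 < B₁) (hB₂ : 0 < B₂) (hC : 0 < C) (hH : 0 < H) (hJ : 0 < J) (hK : 0 < K)
    (m n e : ℝ → Fin 3 → ℝ)
    (hm : Differentiable ℝ m) (hn : Differentiable ℝ n) (he : Differentiable ℝ e)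
    (u : ℝ → Fin 3 → ℝ) (hu : ∀ t, u t = ![m t 0 / B₁, m t 1 / B₂, m t 2 / C])
    (w : ℝ → Fin 3 → ℝ) (hw : ∀ t, w t = ![n t 0 / H, n t 1 / J, 1 + n t 2 / K])
    (heqm : ∀ t, deriv m t = m t ×₃ u t + n t ×₃ w t)
    (heqn : ∀ t, deriv n t = n t ×₃ u t + lam • (e t ×₃ w t))
    (heqe : ∀ t, deriv e t = e t ×₃ u t) :
    ∀ t, deriv (fun t => e t ⬝ᵥ n t) t = 0 :=
  casimir_C2_conserved_general lam n e hn he u w heqn heqe
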